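/- Let P be a two-user q-ary input multiple-access channel (q prime) and (α,γ) ∈ F_q² with (α,γ) ≠ (0,0). Then the channels (P[α,γ])^b and (P⁻)[α,γ] are equal: (P[α,γ])^b(y₁,y₂ | x) = (P⁻)[α,γ](y₁,y₂ | x) for all y₁, y₂, x. Consequently, I((P⁻)[α,γ]) + I((P⁺)[α,γ]) ≥ 2 I(P[α,γ]). -/

import Mathlib

open Finset

namespace PolarMAC

/-- A two-user `q`-ary input multiple-access channel: an arbitrary finite output
alphabet `Y` together with transition probabilities `P x w y = P(y | x, w)`. -/
structure MAC (q : ℕ) where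
  Y : Type
  [fintypeY : Fintype Y]
  P : ZMod q → ZMod q → Y → ℝ

attribute [instance] MAC.fintypeY

/-- `M` is a genuine MAC: entries nonnegative and rows summing to one. -/
def IsMAC {q : ℕ} [Fact (Nat.Prime q)] (M : MAC q) : Prop :=
  (∀ x w y, 0 ≤ M.P x w y) ∧ ∀ x w, ∑ y, M.P x w y = 1

/-- Entropy (base `q`) of a pmf on a finite type. -/
noncomputable def Hq (q : ℕ) {α : Type*} [Fintype α] (p : α → ℝ) : ℝ :=
  ∑ a, -(p a * Real.logb q (p a))

/-- Mutual information (base `q`) between the two coordinates of a joint pmf. -/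
noncomputable def MIq (q : ℕ) {α β : Type*} [Fintype α] [Fintype β] (p : α → β → ℝ) : ℝ :=
  Hq q (fun a => ∑ b, p a b) + Hq q (fun b => ∑ a, p a b) - Hq q (fun ab : α × β => p ab.1 ab.2)

variable (q : ℕ) [Fact (Nat.Prime q)]

/-- `I⁽¹⁾(P) = I(X; Y W)` for independent uniform inputs. -/
noncomputable def I1 (M : MAC q) : ℝ :=
  MIq q (fun (x : ZMod q) (wy : ZMod q × M.Y) => M.P x wy.1 wy.2 / (q : ℝ) ^ 2)

/-- `I⁽²⁾(P) = I(W; Y X)` for independent uniform inputs. -/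
noncomputable def I2 (M : MAC q) : ℝ :=
  MIq q (fun (w : ZMod q) (xy : ZMod q × M.Y) => M.P xy.1 w xy.2 / (q : ℝ) ^ 2)

/-- `I⁽¹²⁾(P) = I(X W; Y)` for independent uniform inputs. -/
noncomputable def I12 (M : MAC q) : ℝ :=
  MIq q (fun (xw : ZMod q × ZMod q) (y : M.Y) => M.P xw.1 xw.2 y / (q : ℝ) ^ 2)

/-- `K(P) = (I⁽¹⁾(P), I⁽²⁾(P), I⁽¹²⁾(P)) ∈ ℝ³`, with the Euclidean norm. -/
noncomputable def Kvec (M : MAC q) : EuclideanSpace ℝ (Fin 3) :=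
  WithLp.toLp 2 ![I1 q M, I2 q M, I12 q M]

/-- The transform `P⁻(y₁,y₂ | u₁,v₁) = q⁻² ∑_{u₂,v₂} P(y₁|u₁+u₂, v₁+v₂) P(y₂|u₂,v₂)`. -/
noncomputable def minusT (M : MAC q) : MAC q where
  Y := M.Y × M.Y
  P := fun u₁ v₁ y =>
    ((q : ℝ) ^ 2)⁻¹ * ∑ u₂, ∑ v₂, M.P (u₁ + u₂) (v₁ + v₂) y.1 * M.P u₂ v₂ y.2

/-- The transform `P⁺(y₁,y₂,u₁,v₁ | u₂,v₂) = q⁻² P(y₁|u₁+u₂, v₁+v₂) P(y₂|u₂,v₂)`,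
with output `((y₁, y₂), (u₁, v₁))`. -/
noncomputable def plusT (M : MAC q) : MAC q where
  Y := (M.Y × M.Y) × ZMod q × ZMod q
  P := fun u₂ v₂ z =>
    ((q : ℝ) ^ 2)⁻¹ * (M.P (z.2.1 + u₂) (z.2.2 + v₂) z.1.1 * M.P u₂ v₂ z.1.2)



/-- A single-user `q`-ary input channel with finite output alphabet `B`. -/
structure Chan (q : ℕ) where
  B : Type
  [fintypeB : Fintype B]
  Q : ZMod q → B → ℝ

attribute [instance] Chan.fintypeB

/-- `C` is a genuine channel: entries nonnegative, rows summing to one. -/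
def IsChan {q : ℕ} [Fact (Nat.Prime q)] (C : Chan q) : Prop :=
  (∀ x b, 0 ≤ C.Q x b) ∧ ∀ x, ∑ b, C.Q x b = 1


/-- `I(Q)`: mutual information (base `q`) developed across `Q` with uniform input. -/
noncomputable def Ich (C : Chan q) : ℝ :=
  MIq q (fun (x : ZMod q) (b : C.B) => C.Q x b / (q : ℝ))


/-- `P[α,γ](y|s) = q⁻¹ ∑_{u,v : αu+γv=s} P(y|u,v)`, the channel `αU + γV → Y`. -/
noncomputable def chLin (M : MAC q) (a g : ZMod q) : Chan q :=
  ⟨M.Y, fun s y => (q : ℝ)⁻¹ * ∑ u, ∑ v, if a * u + g * v = s then M.P u v y else 0⟩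


/-- `Q^b(y₁,y₂ | x₁) = q⁻¹ ∑_{x₂} Q(y₁|x₁+x₂) Q(y₂|x₂)`. -/
noncomputable def chB (C : Chan q) : Chan q :=
  ⟨C.B × C.B, fun x₁ y => (q : ℝ)⁻¹ * ∑ x₂, C.Q (x₁ + x₂) y.1 * C.Q x₂ y.2⟩

/-- `Q^g(y₁,y₂,x₁ | x₂) = q⁻¹ Q(y₁|x₁+x₂) Q(y₂|x₂)`, output `((y₁,y₂),x₁)`. -/
noncomputable def chG (C : Chan q) : Chan q :=
  ⟨(C.B × C.B) × ZMod q, fun x₂ z => (q : ℝ)⁻¹ * (C.Q (z.2 + x₂) z.1.1 * C.Q x₂ z.1.2)⟩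

/-!
Writing `Q = P[α,γ]` and `L(u,v) = αu + γv`, both `Qᵇ` and `(P⁻)[α,γ]` come from the same triple
sum over `(u₁,v₁)`, `(u₂,v₂)`; substituting `(u₁,v₁) ↦ (u₁,v₁) + (u₂,v₂)` moves one into the other
along the fibres of `L`, so the two channels coincide. With uniform inputs, the chain rule gives
`I(Qᵇ) + I(Qᵍ) = 2 I(Q)`. Finally `Qᵍ` is `(P⁺)[α,γ]` with the output component `(u₁,v₁)` merged to
`L(u₁,v₁)`, so the data processing inequality (the log-sum inequality, fibrewise) gives
`I(Qᵍ) ≤ I((P⁺)[α,γ])`.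
-/

section Entropy

variable {α β γ : Type*} [Fintype α] [Fintype β] [Fintype γ] (n : ℕ)

lemma Hq_eq_sum_negMulLog (p : α → ℝ) :
    Hq n p = (∑ a, Real.negMulLog (p a)) / Real.log n := by
  simp only [Hq, Real.negMulLog, Real.logb, sum_div]
  exact sum_congr rfl fun _ _ => by ring

lemma Hq_comp_equiv (e : α ≃ β) (p : β → ℝ) : Hq n (fun a => p (e a)) = Hq n p :=
  Fintype.sum_equiv e _ _ fun _ => rfl

lemma Hq_mul {p : α → ℝ} {r : β → ℝ} (hp : ∑ a, p a = 1) (hr : ∑ b, r b = 1) :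
    Hq n (fun ab : α × β => p ab.1 * r ab.2) = Hq n p + Hq n r := by
  simp only [Hq_eq_sum_negMulLog, Real.negMulLog_mul, Fintype.sum_prod_type,
    sum_add_distrib, ← mul_sum, ← sum_mul, hp, hr]
  ring

lemma Hq_sub_Hq_eq (p : α → β → ℝ) :
    Hq n (fun b => ∑ a, p a b) - Hq n (fun ab : α × β => p ab.1 ab.2) =
      (∑ a, ∑ b, p a b * (Real.log (p a b) - Real.log (∑ a', p a' b))) / Real.log n := by
  simp only [Hq_eq_sum_negMulLog, Real.negMulLog, Fintype.sum_prod_type, mul_sub,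
    sum_sub_distrib, ← sub_div]
  rw [sum_comm (f := fun a b => p a b * Real.log (∑ a', p a' b))]
  simp only [← sum_mul, neg_mul, sum_neg_distrib]
  ring

theorem log_sum_inequality {ι : Type*} (s : Finset ι) {A B : ι → ℝ}
    (hA : ∀ i ∈ s, 0 ≤ A i) (hB : ∀ i ∈ s, 0 ≤ B i) (hAB : ∀ i ∈ s, B i = 0 → A i = 0) :
    (∑ i ∈ s, A i) * (Real.log (∑ i ∈ s, A i) - Real.log (∑ i ∈ s, B i)) ≤
      ∑ i ∈ s, A i * (Real.log (A i) - Real.log (B i)) := by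
  set SA := ∑ i ∈ s, A i with hSAdef
  set SB := ∑ i ∈ s, B i
  rcases (sum_nonneg hA).eq_or_lt with hSA | hSA
  · rw [hSAdef, ← hSA, zero_mul]
    refine sum_nonneg fun i hi => ?_
    rw [(sum_eq_zero_iff_of_nonneg hA).mp hSA.symm i hi, zero_mul]
  have hSB : 0 < SB := by
    refine (sum_nonneg hB).lt_of_ne fun hSB => hSA.ne' ?_
    exact sum_eq_zero fun i hi =>
      hAB i hi ((sum_eq_zero_iff_of_nonneg hB).mp hSB.symm i hi)
  -- Gibbs' termwise bound `log x ≤ x - 1` at `x = B i * r / A i`, with `r = SA / SB`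
  have termwise : ∀ i ∈ s, ∀ r : ℝ, 0 < r →
      A i * Real.log r + A i - B i * r ≤ A i * (Real.log (A i) - Real.log (B i)) := by
    intro i hi r hr
    rcases (hA i hi).eq_or_lt with hA0 | hApos
    · rw [← hA0]
      nlinarith [hB i hi]
    have hBpos : 0 < B i := (hB i hi).lt_of_ne fun h => hApos.ne' (hAB i hi h.symm)
    have hlog := Real.log_le_sub_one_of_pos (x := B i * r / A i) (by positivity)
    rw [Real.log_div (by positivity) hApos.ne', Real.log_mul hBpos.ne' hr.ne'] at hlog
    have hcancel : A i * (B i * r / A i) = B i * r := by field_simp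
    nlinarith [mul_le_mul_of_nonneg_left hlog hApos.le]
  have hsum := sum_le_sum fun i hi => termwise i hi (SA / SB) (by positivity)
  rw [sum_sub_distrib, sum_add_distrib, ← sum_mul, ← sum_mul,
    mul_div_cancel₀ _ hSB.ne', Real.log_div hSA.ne' hSB.ne'] at hsum
  linarith

theorem MIq_pushforward_le [DecidableEq γ] (p : α → β → ℝ) (hp : ∀ a b, 0 ≤ p a b)
    (f : β → γ) : MIq n (fun a c => ∑ b with f b = c, p a b) ≤ MIq n p := by
  have hinput : (fun a => ∑ c, ∑ b with f b = c, p a b) = fun a => ∑ b, p a b :=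
    funext fun a => sum_fiberwise _ _ _
  simp only [MIq, hinput, add_sub_assoc, Hq_sub_Hq_eq]
  gcongr with a
  rw [← sum_fiberwise univ f]
  gcongr with c
  rw [sum_comm]
  exact log_sum_inequality _ (fun b _ => hp a b)
    (fun b _ => sum_nonneg fun a' _ => hp a' b)
    (fun b _ hb => (sum_eq_zero_iff_of_nonneg fun a' _ => hp a' b).mp hb a
      (mem_univ a))

end Entropy

section ChainRule

variable {q}

noncomputable def jointDist (C : Chan q) (xb : ZMod q × C.B) : ℝ := C.Q xb.1 xb.2 / q

noncomputable def outputDist (C : Chan q) (b : C.B) : ℝ := ∑ x, C.Q x b / q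

lemma natCast_pos_of_prime : (0 : ℝ) < q := by exact_mod_cast (Fact.out : q.Prime).pos

lemma Hq_uniform : Hq q (fun _ : ZMod q => (q : ℝ)⁻¹) = 1 := by
  have hq : (1 : ℝ) < q := by exact_mod_cast (Fact.out : q.Prime).one_lt
  simp only [Hq, sum_const, card_univ, ZMod.card, nsmul_eq_mul, Real.logb_inv,
    Real.logb_self_eq_one hq]
  field_simp

lemma sum_jointDist {C : Chan q} (hC : ∀ x, ∑ b, C.Q x b = 1) : ∑ xb, jointDist C xb = 1 := by
  simp only [jointDist, Fintype.sum_prod_type, ← sum_div, hC, sum_const,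
    card_univ, ZMod.card, nsmul_eq_mul]
  field_simp [natCast_pos_of_prime.ne']

lemma sum_outputDist {C : Chan q} (hC : ∀ x, ∑ b, C.Q x b = 1) : ∑ b, outputDist C b = 1 := by
  rw [← sum_jointDist hC, Fintype.sum_prod_type_right]
  rfl

lemma Ich_eq_one_add_Hq_sub_Hq {C : Chan q} (hC : ∀ x, ∑ b, C.Q x b = 1) :
    Ich q C = 1 + Hq q (outputDist C) - Hq q (jointDist C) := by
  have hinput : (fun x : ZMod q => ∑ b, C.Q x b / q) = fun _ => (q : ℝ)⁻¹ :=
    funext fun x => by rw [← sum_div, hC, one_div]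
  rw [Ich, MIq, hinput, Hq_uniform]
  rfl

lemma sum_chB_Q {C : Chan q} (hC : ∀ x, ∑ b, C.Q x b = 1) (x₁ : ZMod q) :
    ∑ y, (chB q C).Q x₁ y = 1 := by
  have hprod : ∀ x₂, ∑ y : C.B × C.B, C.Q (x₁ + x₂) y.1 * C.Q x₂ y.2 = 1 := fun x₂ => by
    rw [Fintype.sum_prod_type, ← sum_mul_sum, hC, hC, one_mul]
  change ∑ y : C.B × C.B, (q : ℝ)⁻¹ * ∑ x₂, C.Q (x₁ + x₂) y.1 * C.Q x₂ y.2 = 1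
  rw [← mul_sum, sum_comm]
  simp only [hprod, sum_const, card_univ, ZMod.card, nsmul_eq_mul, mul_one]
  field_simp [natCast_pos_of_prime.ne']

lemma sum_chG_Q {C : Chan q} (hC : ∀ x, ∑ b, C.Q x b = 1) (x₂ : ZMod q) :
    ∑ z, (chG q C).Q x₂ z = 1 := by
  have hprod : ∀ x₁, ∑ y : C.B × C.B, C.Q (x₁ + x₂) y.1 * C.Q x₂ y.2 = 1 := fun x₁ => by
    rw [Fintype.sum_prod_type, ← sum_mul_sum, hC, hC, one_mul]
  change ∑ z : (C.B × C.B) × ZMod q, (q : ℝ)⁻¹ * (C.Q (z.2 + x₂) z.1.1 * C.Q x₂ z.1.2) = 1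
  rw [← mul_sum, Fintype.sum_prod_type_right]
  simp only [hprod, sum_const, card_univ, ZMod.card, nsmul_eq_mul, mul_one]
  field_simp [natCast_pos_of_prime.ne']

lemma outputDist_chB (C : Chan q) (y : C.B × C.B) :
    outputDist (chB q C) y = outputDist C y.1 * outputDist C y.2 := by
  have hshift : ∀ x₂, ∑ x₁, C.Q (x₁ + x₂) y.1 = ∑ x, C.Q x y.1 := fun x₂ =>
    Fintype.sum_equiv (Equiv.addRight x₂) _ _ fun _ => rfl
  simp only [outputDist, chB, ← sum_div, ← mul_sum]
  rw [sum_comm]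
  simp only [← sum_mul, hshift, ← mul_sum]
  ring

lemma outputDist_chG (C : Chan q) (z : (C.B × C.B) × ZMod q) :
    outputDist (chG q C) z = jointDist (chB q C) (z.2, z.1) := by
  simp only [outputDist, jointDist, chG, chB, ← sum_div, ← mul_sum]

/-- The input and output of `chG q C` consist of two independent uses `(x₁ + x₂, y₁)` and
`(x₂, y₂)` of `C`. -/
def chGEquiv {n : ℕ} (B : Type) : ZMod n × (B × B) × ZMod n ≃ (ZMod n × B) × (ZMod n × B) where
  toFun w := ((w.2.2 + w.1, w.2.1.1), (w.1, w.2.1.2))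
  invFun p := (p.2.1, (p.1.2, p.2.2), p.1.1 - p.2.1)
  left_inv w := by simp
  right_inv p := by simp

lemma jointDist_chG (C : Chan q) (w : ZMod q × (C.B × C.B) × ZMod q) :
    jointDist (chG q C) w =
      (fun p => jointDist C p.1 * jointDist C p.2) (chGEquiv C.B w) := by
  simp only [jointDist, chG, chGEquiv, Equiv.coe_fn_mk]
  ring

theorem Ich_chB_add_Ich_chG {C : Chan q} (hC : ∀ x, ∑ b, C.Q x b = 1) :
    Ich q (chB q C) + Ich q (chG q C) = 2 * Ich q C := by
  have hB : Hq q (outputDist (chB q C)) = 2 * Hq q (outputDist C) := by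
    rw [funext (outputDist_chB C), two_mul]
    exact Hq_mul q (sum_outputDist hC) (sum_outputDist hC)
  have hG : Hq q (jointDist (chG q C)) = 2 * Hq q (jointDist C) := by
    rw [funext (jointDist_chG C), two_mul]
    exact (Hq_comp_equiv q (chGEquiv C.B) _).trans
      (Hq_mul q (sum_jointDist hC) (sum_jointDist hC))
  have hGB : Hq q (outputDist (chG q C)) = Hq q (jointDist (chB q C)) := by
    rw [funext (outputDist_chG C)]
    exact Hq_comp_equiv q (Equiv.prodComm _ _) _
  rw [Ich_eq_one_add_Hq_sub_Hq (sum_chB_Q hC), Ich_eq_one_add_Hq_sub_Hq (sum_chG_Q hC),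
    Ich_eq_one_add_Hq_sub_Hq hC, hB, hG, hGB]
  ring

end ChainRule

section Fibers

variable {G H R : Type*} [AddCommGroup G] [Fintype G] [AddCommGroup H] [DecidableEq H]
  [CommSemiring R] (L : G →+ H)

lemma sum_fiber_comp_add_right (F : G → R) (h : H) (w₀ : G) :
    ∑ w with L w = h, F (w + w₀) = ∑ w with L w = h + L w₀, F w :=
  sum_equiv (Equiv.addRight w₀) (by simp) (by simp)

lemma sum_sum_fiber_mul_sum_fiber [Fintype H] (F K : G → R) (h : H) :
    ∑ h₂, (∑ w₁ with L w₁ = h + h₂, F w₁) * (∑ w₂ with L w₂ = h₂, K w₂) =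
      ∑ w with L w = h, ∑ w₂, F (w + w₂) * K w₂ := by
  calc ∑ h₂, (∑ w₁ with L w₁ = h + h₂, F w₁) * (∑ w₂ with L w₂ = h₂, K w₂)
      = ∑ h₂, ∑ w₂ with L w₂ = h₂, (∑ w₁ with L w₁ = h + L w₂, F w₁) * K w₂ := by
        refine sum_congr rfl fun h₂ _ => ?_
        rw [mul_sum]
        exact sum_congr rfl fun w₂ hw₂ => by rw [(mem_filter.1 hw₂).2]
    _ = ∑ w₂, ∑ w with L w = h, F (w + w₂) * K w₂ := by
        simp only [sum_fiberwise, ← sum_fiber_comp_add_right, sum_mul]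
    _ = ∑ w with L w = h, ∑ w₂, F (w + w₂) * K w₂ := sum_comm

lemma sum_fiber_sum_fiber_mul (F K : G → R) (h₁ h₂ : H) :
    ∑ w₁ with L w₁ = h₁, ∑ w₂ with L w₂ = h₂, F (w₁ + w₂) * K w₂ =
      (∑ w with L w = h₁ + h₂, F w) * ∑ w₂ with L w₂ = h₂, K w₂ := by
  rw [sum_comm, mul_sum]
  refine sum_congr rfl fun w₂ hw₂ => ?_
  rw [← sum_mul, sum_fiber_comp_add_right, (mem_filter.1 hw₂).2]

lemma card_fiber_mul_card_of_surjective [Fintype H] (hL : Function.Surjective L) (h : H) :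
    #{w | L w = h} * Fintype.card H = Fintype.card G := by
  have hfibers : ∀ h', #{w | L w = h'} = #{w | L w = h} := fun h' =>
    AddMonoidHom.card_fiber_eq_of_mem_range L (hL h') (hL h)
  have hpartition := card_eq_sum_card_fiberwise (f := L) (s := univ) (t := univ) (by simp)
  simp only [card_univ, hfibers, sum_const, smul_eq_mul] at hpartition
  rw [hpartition, mul_comm]

lemma sum_filter_prodMap_id {α β γ R : Type*} [Fintype α] [Fintype β] [DecidableEq α]
    [DecidableEq γ] [AddCommMonoid R] (f : β → γ) (F : α × β → R) (a : α) (c : γ) :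
    ∑ z with Prod.map id f z = (a, c), F z = ∑ b with f b = c, F (a, b) := by
  rw [sum_filter, sum_filter, Fintype.sum_prod_type]
  simp [Prod.map, ite_and]

end Fibers

section LinearCombination

def linComb {R : Type*} [CommSemiring R] (a g : R) : R × R →+ R :=
  (AddMonoidHom.mulLeft a).coprod (AddMonoidHom.mulLeft g)

lemma linComb_surjective {K : Type*} [Field K] {a g : K} (hag : (a, g) ≠ (0, 0)) :
    Function.Surjective (linComb a g) := by
  intro s
  by_cases ha : a = 0
  · have hg : g ≠ 0 := fun hg => hag (by rw [ha, hg])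
    exact ⟨(0, g⁻¹ * s), by simp [linComb, hg]⟩
  · exact ⟨(a⁻¹ * s, 0), by simp [linComb, ha]⟩

variable {q}

lemma card_fiber_linComb {a g : ZMod q} (hag : (a, g) ≠ (0, 0)) (s : ZMod q) :
    #{w | linComb a g w = s} = q := by
  have h := card_fiber_mul_card_of_surjective _ (linComb_surjective hag) s
  rw [Fintype.card_prod, ZMod.card] at h
  exact Nat.eq_of_mul_eq_mul_right (Fact.out : q.Prime).pos h

lemma chLin_Q (M : MAC q) (a g s : ZMod q) (y : M.Y) :
    (chLin q M a g).Q s y = (q : ℝ)⁻¹ * ∑ w with linComb a g w = s, M.P w.1 w.2 y := by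
  rw [sum_filter, Fintype.sum_prod_type]
  rfl

lemma sum_chLin_Q {M : MAC q} (hM : ∀ u v, ∑ y, M.P u v y = 1) {a g : ZMod q}
    (hag : (a, g) ≠ (0, 0)) (s : ZMod q) : ∑ y, (chLin q M a g).Q s y = 1 := by
  change ∑ y : M.Y, (chLin q M a g).Q s y = 1
  simp only [chLin_Q, ← mul_sum]
  rw [sum_comm]
  simp [hM, card_fiber_linComb hag, natCast_pos_of_prime.ne']

lemma chLin_Q_nonneg {M : MAC q} (hM : ∀ u v y, 0 ≤ M.P u v y) (a g s : ZMod q) (y : M.Y) :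
    0 ≤ (chLin q M a g).Q s y := by
  rw [chLin_Q]
  exact mul_nonneg (by positivity) (sum_nonneg fun w _ => hM _ _ _)

lemma minusT_P (M : MAC q) (u v : ZMod q) (y : M.Y × M.Y) :
    (minusT q M).P u v y =
      ((q : ℝ) ^ 2)⁻¹ * ∑ w : ZMod q × ZMod q, M.P (u + w.1) (v + w.2) y.1 * M.P w.1 w.2 y.2 := by
  rw [Fintype.sum_prod_type]
  rfl

lemma chB_chLin_Q (M : MAC q) (a g x : ZMod q) (y : M.Y × M.Y) :
    (chB q (chLin q M a g)).Q x y = (chLin q (minusT q M) a g).Q x y := by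
  change (q : ℝ)⁻¹ * ∑ x₂, (chLin q M a g).Q (x + x₂) y.1 * (chLin q M a g).Q x₂ y.2 =
    (chLin q (minusT q M) a g).Q x y
  rw [chLin_Q (minusT q M) a g x y]
  simp only [chLin_Q, minusT_P, mul_mul_mul_comm _ (∑ w ∈ _, _), ← mul_sum]
  rw [sum_sum_fiber_mul_sum_fiber (linComb a g) (fun w => M.P w.1 w.2 y.1)
    (fun w => M.P w.1 w.2 y.2)]
  simp only [Prod.fst_add, Prod.snd_add]
  ring

lemma chB_chLin (M : MAC q) (a g : ZMod q) :
    chB q (chLin q M a g) = chLin q (minusT q M) a g :=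
  congrArg (Chan.mk (M.Y × M.Y)) (funext fun x => funext fun y => chB_chLin_Q M a g x y)

lemma chLin_plusT_Q (M : MAC q) (a g s : ZMod q) (y : M.Y × M.Y) (w₁ : ZMod q × ZMod q) :
    (chLin q (plusT q M) a g).Q s (y, w₁) = ((q : ℝ) ^ 3)⁻¹ *
      ∑ w₂ with linComb a g w₂ = s, M.P (w₁ + w₂).1 (w₁ + w₂).2 y.1 * M.P w₂.1 w₂.2 y.2 := by
  rw [chLin_Q (plusT q M) a g s (y, w₁), mul_sum, mul_sum]
  refine sum_congr rfl fun w₂ _ => ?_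
  change (q : ℝ)⁻¹ * (((q : ℝ) ^ 2)⁻¹ * (M.P (w₁.1 + w₂.1) (w₁.2 + w₂.2) y.1 * _)) = _
  rw [Prod.fst_add, Prod.snd_add]
  ring

lemma sum_fiber_chLin_plusT_Q (M : MAC q) [DecidableEq M.Y] (a g s : ZMod q)
    (c : (M.Y × M.Y) × ZMod q) :
    ∑ z : (M.Y × M.Y) × ZMod q × ZMod q with Prod.map id (linComb a g) z = c,
        (chLin q (plusT q M) a g).Q s z = (chG q (chLin q M a g)).Q s c := by
  obtain ⟨y, x₁⟩ := c
  refine (sum_filter_prodMap_id (linComb a g) (fun z => (chLin q (plusT q M) a g).Q s z)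
    y x₁).trans ?_
  change _ = (q : ℝ)⁻¹ * ((chLin q M a g).Q (x₁ + s) y.1 * (chLin q M a g).Q s y.2)
  simp only [chLin_plusT_Q, ← mul_sum]
  rw [sum_fiber_sum_fiber_mul (linComb a g) (fun w => M.P w.1 w.2 y.1)
    (fun w => M.P w.1 w.2 y.2), chLin_Q, chLin_Q]
  ring

lemma Ich_chG_chLin_le {M : MAC q} (hM : ∀ u v y, 0 ≤ M.P u v y) (a g : ZMod q) :
    Ich q (chG q (chLin q M a g)) ≤ Ich q (chLin q (plusT q M) a g) := by
  classical
  have hplus : ∀ u v z, 0 ≤ (plusT q M).P u v z := fun u v z =>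
    mul_nonneg (by positivity) (mul_nonneg (hM _ _ _) (hM _ _ _))
  calc Ich q (chG q (chLin q M a g))
      = MIq q (fun s c => ∑ z with Prod.map id (linComb a g) z = c,
          (chLin q (plusT q M) a g).Q s z / q) := by
        refine congrArg (MIq q) (funext fun s => funext fun c => ?_)
        exact (congrArg (· / (q : ℝ)) (sum_fiber_chLin_plusT_Q M a g s c)).symm.trans
          (sum_div _ _ _)
    _ ≤ Ich q (chLin q (plusT q M) a g) :=
        MIq_pushforward_le q _ (fun s z => div_nonneg (chLin_Q_nonneg hplus a g s z)
          natCast_pos_of_prime.le) _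

end LinearCombination

/-- **Appendix B, claim (ii)**: `(P[α,γ])^b` and `(P⁻)[α,γ]` are the same channel;
consequently `I((P⁻)[α,γ]) + I((P⁺)[α,γ]) ≥ 2 I(P[α,γ])`. -/
theorem chB_equivalent (q : ℕ) [Fact (Nat.Prime q)] (M : MAC q) (hM : IsMAC M)
    (a g : ZMod q) (hag : (a, g) ≠ (0, 0)) :
    (∀ (y₁ y₂ : M.Y) (x : ZMod q),
      (chB q (chLin q M a g)).Q x (y₁, y₂) = (chLin q (minusT q M) a g).Q x (y₁, y₂)) ∧
    2 * Ich q (chLin q M a g) ≤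
      Ich q (chLin q (minusT q M) a g) + Ich q (chLin q (plusT q M) a g) := by
  obtain ⟨hM_nonneg, hM_sum⟩ := hM
  refine ⟨fun y₁ y₂ x => chB_chLin_Q M a g x (y₁, y₂), ?_⟩
  rw [← chB_chLin, ← Ich_chB_add_Ich_chG (sum_chLin_Q hM_sum hag)]
  exact add_le_add_right (Ich_chG_chLin_le hM_nonneg a g) _

end PolarMAC
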